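/- (Theorem A.1, hindsight policy gradient with next-state rewards.) Let r : S → ℝ be a reward function depending only on the entered state, and for θ ∈ ℝ^d and s_0 ∈ S define the value V^θ(s_0) := Σ_{k=0}^∞ γ^k · Σ_{s'∈S} P_{k+1}^θ(s_0,s')·r(s'). Then θ ↦ V^θ(s_0) is differentiable, and its gradient satisfies ∇_θ V^θ(s_0) = Σ_{t=0}^∞ γ^t · Σ_{s∈S} P_t^θ(s_0,s) · Σ_{a∈A} ∇_θ log π_θ(s,a) · ( Σ_{k=t}^∞ γ^{k−t} · Σ_{s'∈S} h_{k+1−t}^θ(a|s,s')·P_{k+1−t}^θ(s,s')·r(s') ), where all series converge absolutely. -/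

import Mathlib

open Finset

noncomputable section
open scoped Classical

/-- n-step state probabilities induced by a policy `π` and a transition kernel `p`:
`Pn 0 s s' = [s' = s]` and `Pn (n+1) s s' = ∑ a, π s a * ∑ s'', p s a s'' * Pn n s'' s'`. -/
def Pn {S A : Type*} [Fintype S] [Fintype A] (p : S → A → S → ℝ) (π : S → A → ℝ) :
    ℕ → S → S → ℝ
  | 0, s, s' => if s' = s then 1 else 0
  | n + 1, s, s' => ∑ a, π s a * ∑ s'', p s a s'' * Pn p π n s'' s'

/-- Action-conditioned n-step probabilities, defined for indices `n ≥ 1` by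
`Pa (n+1) s a s' = ∑ s'', p s a s'' * Pn n s'' s'` (the value at `n = 0` is irrelevant). -/
def Pa {S A : Type*} [Fintype S] [Fintype A] (p : S → A → S → ℝ) (π : S → A → ℝ) :
    ℕ → S → A → S → ℝ
  | 0, _, _, _ => 0
  | n + 1, s, a, s' => ∑ s'', p s a s'' * Pn p π n s'' s'

/-- Hindsight probability `h_n(a | s, s')`. -/
def hca {S A : Type*} [Fintype S] [Fintype A] (p : S → A → S → ℝ) (π : S → A → ℝ)
    (n : ℕ) (a : A) (s s' : S) : ℝ :=
  if 0 < Pn p π n s s' then π s a * Pa p π n s a s' / Pn p π n s s' else 0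

/-!
Differentiating the recursion for `P_n` gives
`∇P_n(s, s') = ∑_{t < n} ∑_{σ, a} P_t(s, σ) Pa_{n-t}(σ, a, s') ∇π(σ, a)`, one term for each time
`t` at which the policy acts. These coefficients are at most `n`, so near `θ` the differentiated
value series is dominated by `∑ (k + 1) γ^k` and `V` may be differentiated termwise. Collecting
terms, the coefficient of `∇π(σ, a)` in `∇V` is the Cauchy product of the discounted visits
`∑_t γ^t P_t(s₀, σ)` with the action value `Q(σ, a) = ∑_j γ^j ∑_{s'} Pa_{j+1}(σ, a, s') r(s')`.
Finally `h_{j+1}(a | s, s') P_{j+1}(s, s') = π(s, a) Pa_{j+1}(s, a, s')` and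
`∇ log π = π⁻¹ ∇π` turn `Q(σ, a) ∇π(σ, a)` into the hindsight form.
-/

section Bounds

variable {ι κ M : Type*} [Fintype ι] [Fintype κ]

theorem le_one_of_sum_eq_one {w : ι → ℝ} (hw0 : ∀ i, 0 ≤ w i) (hw1 : ∑ i, w i = 1) (i : ι) :
    w i ≤ 1 :=
  hw1 ▸ single_le_sum (fun j _ => hw0 j) (mem_univ i)

theorem abs_sum_mul_le_mul_sum_abs {w r : ι → ℝ} {B : ℝ} (hw : ∀ i, |w i| ≤ B) :
    |∑ i, w i * r i| ≤ B * ∑ i, |r i| := by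
  rw [mul_sum]
  refine (abs_sum_le_sum_abs _ _).trans (sum_le_sum fun i _ => ?_)
  rw [abs_mul]
  exact mul_le_mul_of_nonneg_right (hw i) (abs_nonneg _)

theorem abs_pow_mul_sum_mul_le {γ : ℝ} (hγ0 : 0 ≤ γ) {w : ι → ℝ} {B : ℝ}
    (hw0 : ∀ i, 0 ≤ w i) (hw : ∀ i, w i ≤ B) (r : ι → ℝ) (n : ℕ) :
    |γ ^ n * ∑ i, w i * r i| ≤ γ ^ n * (B * ∑ i, |r i|) := by
  rw [abs_mul, abs_of_nonneg (pow_nonneg hγ0 n)]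
  refine mul_le_mul_of_nonneg_left (abs_sum_mul_le_mul_sum_abs fun i => ?_) (pow_nonneg hγ0 n)
  rw [abs_of_nonneg (hw0 i)]
  exact hw i

theorem summable_abs_of_abs_le_geometric {γ : ℝ} (hγ0 : 0 ≤ γ) (hγ1 : γ < 1) {f : ℕ → ℝ}
    {C : ℝ} (hf : ∀ n, |f n| ≤ γ ^ n * C) : Summable fun n => |f n| :=
  .of_nonneg_of_le (fun _ => abs_nonneg _) hf ((summable_geometric_of_lt_one hγ0 hγ1).mul_right C)

theorem norm_sum_sum_smul_le [SeminormedAddCommGroup M] [NormedSpace ℝ M] {c : ι → κ → ℝ}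
    {B : ℝ} (hc : ∀ i k, |c i k| ≤ B) (v : ι → κ → M) :
    ‖∑ i, ∑ k, c i k • v i k‖ ≤ B * ∑ i, ∑ k, ‖v i k‖ := by
  simp only [mul_sum]
  refine (norm_sum_le _ _).trans (sum_le_sum fun i _ => (norm_sum_le _ _).trans
    (sum_le_sum fun k _ => ?_))
  rw [norm_smul, Real.norm_eq_abs]
  exact mul_le_mul_of_nonneg_right (hc i k) (norm_nonneg _)

theorem summable_norm_sum_sum_smul [SeminormedAddCommGroup M] [NormedSpace ℝ M]
    {c : ℕ → ι → κ → ℝ} (hc : ∀ i k, Summable fun n => |c n i k|) (v : ι → κ → M) :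
    Summable fun n => ‖∑ i, ∑ k, c n i k • v i k‖ := by
  refine .of_nonneg_of_le (fun _ => norm_nonneg _) (fun n => (norm_sum_le _ _).trans
    (sum_le_sum fun i _ => norm_sum_le _ _)) (summable_sum fun i _ => summable_sum fun k _ => ?_)
  simp only [norm_smul, Real.norm_eq_abs]
  exact (hc i k).mul_right _

theorem tsum_sum_sum_smul [AddCommGroup M] [Module ℝ M] [TopologicalSpace M]
    [IsTopologicalAddGroup M] [ContinuousSMul ℝ M] [T2Space M] {c : ℕ → ι → κ → ℝ}
    (hc : ∀ i k, Summable fun n => c n i k) (v : ι → κ → M) :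
    ∑' n, ∑ i, ∑ k, c n i k • v i k = ∑ i, ∑ k, (∑' n, c n i k) • v i k := by
  rw [Summable.tsum_finsetSum fun i _ => summable_sum fun k _ => (hc i k).smul_const _]
  refine sum_congr rfl fun i _ => ?_
  rw [Summable.tsum_finsetSum fun k _ => (hc i k).smul_const _]
  exact sum_congr rfl fun k _ => (hc i k).tsum_smul_const _

end Bounds

section Stochastic

variable {S A : Type*} [Fintype S] [Fintype A] {p : S → A → S → ℝ} {π : S → A → ℝ}

theorem Pn_nonneg (hp0 : ∀ s a s', 0 ≤ p s a s') (hπ0 : ∀ s a, 0 ≤ π s a) :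
    ∀ n s s', 0 ≤ Pn p π n s s'
  | 0, s, s' => by unfold Pn; positivity
  | n + 1, s, s' => sum_nonneg fun a _ => mul_nonneg (hπ0 s a) <|
      sum_nonneg fun s'' _ => mul_nonneg (hp0 s a s'') (Pn_nonneg hp0 hπ0 n s'' s')

theorem sum_Pn (hp1 : ∀ s a, ∑ s', p s a s' = 1) (hπ1 : ∀ s, ∑ a, π s a = 1) :
    ∀ n s, ∑ s', Pn p π n s s' = 1
  | 0, s => by simp [Pn]
  | n + 1, s => by
    have hstep : ∀ a, ∑ s', ∑ s'', p s a s'' * Pn p π n s'' s' = 1 := fun a => by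
      rw [sum_comm]
      simp only [← mul_sum, sum_Pn hp1 hπ1 n, mul_one, hp1]
    simp only [Pn]
    rw [sum_comm]
    simp only [← mul_sum, hstep, mul_one, hπ1]

theorem Pn_le_one (hp0 : ∀ s a s', 0 ≤ p s a s') (hp1 : ∀ s a, ∑ s', p s a s' = 1)
    (hπ0 : ∀ s a, 0 ≤ π s a) (hπ1 : ∀ s, ∑ a, π s a = 1) (n : ℕ) (s s' : S) :
    Pn p π n s s' ≤ 1 :=
  le_one_of_sum_eq_one (Pn_nonneg hp0 hπ0 n s) (sum_Pn hp1 hπ1 n s) s'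

theorem abs_pow_mul_Pn_le (hp0 : ∀ s a s', 0 ≤ p s a s') (hp1 : ∀ s a, ∑ s', p s a s' = 1)
    (hπ0 : ∀ s a, 0 ≤ π s a) (hπ1 : ∀ s, ∑ a, π s a = 1) {γ : ℝ} (hγ0 : 0 ≤ γ)
    (n : ℕ) (s s' : S) : |γ ^ n * Pn p π n s s'| ≤ γ ^ n := by
  rw [abs_mul, abs_of_nonneg (pow_nonneg hγ0 n), abs_of_nonneg (Pn_nonneg hp0 hπ0 n s s')]
  exact mul_le_of_le_one_right (pow_nonneg hγ0 n) (Pn_le_one hp0 hp1 hπ0 hπ1 n s s')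

theorem Pa_nonneg (hp0 : ∀ s a s', 0 ≤ p s a s') (hπ0 : ∀ s a, 0 ≤ π s a) :
    ∀ n s a s', 0 ≤ Pa p π n s a s'
  | 0, _, _, _ => le_rfl
  | n + 1, s, a, s' => sum_nonneg fun s'' _ => mul_nonneg (hp0 s a s'') (Pn_nonneg hp0 hπ0 n s'' s')

theorem Pa_le_one (hp0 : ∀ s a s', 0 ≤ p s a s') (hp1 : ∀ s a, ∑ s', p s a s' = 1)
    (hπ0 : ∀ s a, 0 ≤ π s a) (hπ1 : ∀ s, ∑ a, π s a = 1) :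
    ∀ n s a s', Pa p π n s a s' ≤ 1
  | 0, _, _, _ => zero_le_one
  | n + 1, s, a, s' => calc
      ∑ s'', p s a s'' * Pn p π n s'' s' ≤ ∑ s'', p s a s'' * 1 :=
        sum_le_sum fun s'' _ => mul_le_mul_of_nonneg_left
          (Pn_le_one hp0 hp1 hπ0 hπ1 n s'' s') (hp0 s a s'')
      _ = 1 := by simp [hp1]

theorem Pn_succ_eq_sum_mul_Pa (n : ℕ) (s s' : S) :
    Pn p π (n + 1) s s' = ∑ a, π s a * Pa p π (n + 1) s a s' := rfl

theorem hca_mul_Pn (hp0 : ∀ s a s', 0 ≤ p s a s') (hπ0 : ∀ s a, 0 ≤ π s a)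
    (n : ℕ) (a : A) (s s' : S) :
    hca p π (n + 1) a s s' * Pn p π (n + 1) s s' = π s a * Pa p π (n + 1) s a s' := by
  by_cases hpos : 0 < Pn p π (n + 1) s s'
  · rw [hca, if_pos hpos, div_mul_cancel₀ _ hpos.ne']
  · have hzero : Pn p π (n + 1) s s' = 0 := (not_lt.1 hpos).antisymm (Pn_nonneg hp0 hπ0 _ s s')
    rw [hzero, mul_zero]
    rw [Pn_succ_eq_sum_mul_Pa] at hzero
    exact ((sum_eq_zero_iff_of_nonneg fun b _ => mul_nonneg (hπ0 s b)
      (Pa_nonneg hp0 hπ0 _ s b s')).1 hzero a (mem_univ a)).symm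

end Stochastic

section Gradient

variable {S A : Type*} [Fintype S] [Fintype A] {p : S → A → S → ℝ} {π : S → A → ℝ}

/-- The coefficient of `∇π(σ, a)` in `∇P_n(s, s')`: the chain may sit in `σ` at any time `t < n`,
take `a` there, and then reach `s'` after the remaining `n - t` steps. -/
def gradCoeff (p : S → A → S → ℝ) (π : S → A → ℝ) (n : ℕ) (s σ : S) (a : A) (s' : S) : ℝ :=
  ∑ t ∈ range n, Pn p π t s σ * Pa p π (n - t) σ a s'

theorem gradCoeff_succ (n : ℕ) (s σ : S) (a : A) (s' : S) :
    gradCoeff p π (n + 1) s σ a s' = (if σ = s then Pa p π (n + 1) s a s' else 0) +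
      ∑ b, π s b * ∑ s'', p s b s'' * gradCoeff p π n s'' σ a s' := by
  simp only [gradCoeff, sum_range_succ', Pn, Nat.add_sub_add_right, Nat.sub_zero, ite_mul,
    one_mul, zero_mul, mul_sum, sum_mul, mul_assoc]
  rw [add_comm]
  congr 1
  · split_ifs with h
    · rw [h]
    · rfl
  · rw [sum_comm]
    refine sum_congr rfl fun b _ => ?_
    rw [sum_comm]

theorem gradCoeff_nonneg (hp0 : ∀ s a s', 0 ≤ p s a s') (hπ0 : ∀ s a, 0 ≤ π s a)
    (n : ℕ) (s σ : S) (a : A) (s' : S) : 0 ≤ gradCoeff p π n s σ a s' :=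
  sum_nonneg fun t _ => mul_nonneg (Pn_nonneg hp0 hπ0 t s σ) (Pa_nonneg hp0 hπ0 _ σ a s')

theorem gradCoeff_le (hp0 : ∀ s a s', 0 ≤ p s a s') (hp1 : ∀ s a, ∑ s', p s a s' = 1)
    (hπ0 : ∀ s a, 0 ≤ π s a) (hπ1 : ∀ s, ∑ a, π s a = 1) (n : ℕ) (s σ : S) (a : A) (s' : S) :
    gradCoeff p π n s σ a s' ≤ n := by
  calc gradCoeff p π n s σ a s' ≤ ∑ _t ∈ range n, (1 : ℝ) :=
        sum_le_sum fun t _ => mul_le_one₀ (Pn_le_one hp0 hp1 hπ0 hπ1 t s σ)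
          (Pa_nonneg hp0 hπ0 _ σ a s') (Pa_le_one hp0 hp1 hπ0 hπ1 _ σ a s')
    _ = n := by simp

variable {E : Type*} [NormedAddCommGroup E] [NormedSpace ℝ E]

theorem hasFDerivAt_Pn (Pol : E → S → A → ℝ) (x : E)
    (hPol : ∀ s a, DifferentiableAt ℝ (fun θ => Pol θ s a) x) :
    ∀ n s s', HasFDerivAt (fun θ => Pn p (Pol θ) n s s')
      (∑ σ, ∑ a, gradCoeff p (Pol x) n s σ a s' • fderiv ℝ (fun θ => Pol θ σ a) x) x
  | 0, s, s' => by
    show HasFDerivAt (fun _ => Pn p (Pol x) 0 s s') _ x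
    simpa [gradCoeff] using hasFDerivAt_const _ x
  | n + 1, s, s' => by
    have hstep : HasFDerivAt (fun θ => ∑ b, Pol θ s b * ∑ s'', p s b s'' * Pn p (Pol θ) n s'' s')
        (∑ b, (Pol x s b • ∑ s'', p s b s'' •
            ∑ σ, ∑ a, gradCoeff p (Pol x) n s'' σ a s' • fderiv ℝ (fun θ => Pol θ σ a) x +
          Pa p (Pol x) (n + 1) s b s' • fderiv ℝ (fun θ => Pol θ s b) x)) x :=
      HasFDerivAt.fun_sum fun b _ => (hPol s b).hasFDerivAt.mul <|
        HasFDerivAt.fun_sum fun s'' _ => (hasFDerivAt_Pn Pol x hPol n s'' s').const_mul _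
    refine hstep.congr_fderiv ?_
    simp only [gradCoeff_succ, add_smul, sum_add_distrib, ite_smul, zero_smul, sum_ite_irrel,
      sum_const_zero, sum_ite_eq', mem_univ, if_true, smul_sum, sum_smul, mul_smul]
    rw [add_comm]
    congr 1
    conv_lhs => enter [2, b]; rw [sum_comm]
    conv_lhs => enter [2, b, 2, σ]; rw [sum_comm]
    rw [sum_comm]
    exact sum_congr rfl fun σ _ => sum_comm

theorem hasFDerivAt_sum_Pn_mul (Pol : E → S → A → ℝ) (x : E)
    (hPol : ∀ s a, DifferentiableAt ℝ (fun θ => Pol θ s a) x) (r : S → ℝ) (n : ℕ) (s : S) :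
    HasFDerivAt (fun θ => ∑ s', Pn p (Pol θ) n s s' * r s')
      (∑ σ, ∑ a, (∑ s', gradCoeff p (Pol x) n s σ a s' * r s') •
        fderiv ℝ (fun θ => Pol θ σ a) x) x := by
  refine (HasFDerivAt.fun_sum fun s' _ =>
    (hasFDerivAt_Pn Pol x hPol n s s').mul_const (r s')).congr_fderiv ?_
  simp only [smul_sum, sum_smul, smul_smul]
  rw [sum_comm]
  refine sum_congr rfl fun σ _ => ?_
  rw [sum_comm]
  exact sum_congr rfl fun a _ => sum_congr rfl fun s' _ => by rw [mul_comm]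

theorem hasFDerivAt_tsum_pow_mul_sum_Pn_mul (hp0 : ∀ s a s', 0 ≤ p s a s')
    (hp1 : ∀ s a, ∑ s', p s a s' = 1) (Pol : E → S → A → ℝ) (hPol0 : ∀ θ s a, 0 ≤ Pol θ s a)
    (hPol1 : ∀ θ s, ∑ a, Pol θ s a = 1) (hPoldiff : ∀ s a, ContDiff ℝ 1 fun θ => Pol θ s a)
    {γ : ℝ} (hγ0 : 0 ≤ γ) (hγ1 : γ < 1) (r : S → ℝ) (s₀ : S) (θ : E) :
    HasFDerivAt (fun θ' => ∑' k : ℕ, γ ^ k * ∑ s', Pn p (Pol θ') (k + 1) s₀ s' * r s')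
      (∑' k : ℕ, ∑ σ, ∑ a, (γ ^ k * ∑ s', gradCoeff p (Pol θ) (k + 1) s₀ σ a s' * r s') •
        fderiv ℝ (fun θ' => Pol θ' σ a) θ) θ := by
  have hC : Continuous fun x => ∑ σ, ∑ a, ‖fderiv ℝ (fun θ' => Pol θ' σ a) x‖ :=
    continuous_finsetSum _ fun σ _ => continuous_finsetSum _ fun a _ =>
      ((hPoldiff σ a).continuous_fderiv one_ne_zero).norm
  -- The policy gradients are bounded on a ball around `θ`, which dominates the series there.
  obtain ⟨ε, hε, hCε⟩ := Metric.eventually_nhds_iff_ball.1 <|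
    (hC.continuousAt (x := θ)).eventually_lt continuousAt_const (lt_add_one _)
  set M := (∑ s', |r s'|) * ((∑ σ, ∑ a, ‖fderiv ℝ (fun θ' => Pol θ' σ a) θ‖) + 1)
  have hu : Summable fun k : ℕ => γ ^ k * ((k + 1) * M) := by
    have hγ : ‖γ‖ < 1 := by rwa [Real.norm_eq_abs, abs_of_nonneg hγ0]
    exact (((summable_pow_mul_geometric_of_norm_lt_one 1 hγ).add
      (summable_geometric_of_lt_one hγ0 hγ1)).mul_right M).congr fun k => by ring
  have hsum : Summable fun k : ℕ => γ ^ k * ∑ s', Pn p (Pol θ) (k + 1) s₀ s' * r s' :=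
    summable_abs_iff.1 <| summable_abs_of_abs_le_geometric hγ0 hγ1 fun k =>
      abs_pow_mul_sum_mul_le hγ0 (Pn_nonneg hp0 (hPol0 θ) _ s₀)
        (Pn_le_one hp0 hp1 (hPol0 θ) (hPol1 θ) _ s₀) r k
  refine hasFDerivAt_tsum_of_isPreconnected
    (f := fun k θ' => γ ^ k * ∑ s', Pn p (Pol θ') (k + 1) s₀ s' * r s')
    (f' := fun k x => ∑ σ, ∑ a, (γ ^ k * ∑ s', gradCoeff p (Pol x) (k + 1) s₀ σ a s' * r s') •
      fderiv ℝ (fun θ' => Pol θ' σ a) x) hu Metric.isOpen_ball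
    (convex_ball θ ε).isPreconnected (fun k x _ => ?_) (fun k x hx => ?_)
    (Metric.mem_ball_self hε) hsum (Metric.mem_ball_self hε)
  · refine ((hasFDerivAt_sum_Pn_mul Pol x (fun s a => (hPoldiff s a).differentiable
      one_ne_zero x) r (k + 1) s₀).const_mul (γ ^ k)).congr_fderiv ?_
    simp only [smul_sum, smul_smul]
  · have hcoeff : ∀ σ a, |γ ^ k * ∑ s', gradCoeff p (Pol x) (k + 1) s₀ σ a s' * r s'|
        ≤ γ ^ k * ((k + 1 : ℕ) * ∑ s', |r s'|) := fun σ a =>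
      abs_pow_mul_sum_mul_le hγ0 (gradCoeff_nonneg hp0 (hPol0 x) _ s₀ σ a)
        (gradCoeff_le hp0 hp1 (hPol0 x) (hPol1 x) _ s₀ σ a) r k
    refine (norm_sum_sum_smul_le hcoeff _).trans ?_
    push_cast
    rw [mul_assoc (γ ^ k), mul_assoc]
    gcongr
    exact mul_le_mul_of_nonneg_left (hCε x hx).le (sum_nonneg fun _ _ => abs_nonneg _)

end Gradient

section Hindsight

variable {S A : Type*} [Fintype S] [Fintype A] {p : S → A → S → ℝ} {π : S → A → ℝ}

/-- The action value `Q(s, a)` when the reward `r` is collected on entering a state. -/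
def actionValue (p : S → A → S → ℝ) (π : S → A → ℝ) (γ : ℝ) (r : S → ℝ) (s : S) (a : A) : ℝ :=
  ∑' j : ℕ, γ ^ j * ∑ s', Pa p π (j + 1) s a s' * r s'

theorem pow_mul_sum_gradCoeff_mul (γ : ℝ) (r : S → ℝ) (k : ℕ) (s σ : S) (a : A) :
    γ ^ k * ∑ s', gradCoeff p π (k + 1) s σ a s' * r s' =
      ∑ t ∈ range (k + 1), (γ ^ t * Pn p π t s σ) *
        (γ ^ (k - t) * ∑ s', Pa p π (k - t + 1) σ a s' * r s') := by
  simp only [gradCoeff, sum_mul, mul_sum]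
  rw [sum_comm]
  refine sum_congr rfl fun t ht => sum_congr rfl fun s' _ => ?_
  have htk : t ≤ k := Nat.lt_succ_iff.1 (mem_range.1 ht)
  rw [show k + 1 - t = k - t + 1 by omega, ← pow_mul_pow_sub γ htk]
  ring

theorem hasSum_pow_mul_sum_gradCoeff_mul (hp0 : ∀ s a s', 0 ≤ p s a s')
    (hp1 : ∀ s a, ∑ s', p s a s' = 1) (hπ0 : ∀ s a, 0 ≤ π s a) (hπ1 : ∀ s, ∑ a, π s a = 1)
    {γ : ℝ} (hγ0 : 0 ≤ γ) (hγ1 : γ < 1) (r : S → ℝ) (s σ : S) (a : A) :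
    HasSum (fun k : ℕ => γ ^ k * ∑ s', gradCoeff p π (k + 1) s σ a s' * r s')
      ((∑' t : ℕ, γ ^ t * Pn p π t s σ) * actionValue p π γ r σ a) := by
  have hvisits : Summable fun t : ℕ => ‖γ ^ t * Pn p π t s σ‖ :=
    summable_abs_of_abs_le_geometric (C := 1) hγ0 hγ1 fun t =>
      (abs_pow_mul_Pn_le hp0 hp1 hπ0 hπ1 hγ0 t s σ).trans_eq (mul_one _).symm
  have hreward : Summable fun j : ℕ => ‖γ ^ j * ∑ s', Pa p π (j + 1) σ a s' * r s'‖ :=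
    summable_abs_of_abs_le_geometric hγ0 hγ1 fun j => abs_pow_mul_sum_mul_le hγ0
      (Pa_nonneg hp0 hπ0 _ σ a) (Pa_le_one hp0 hp1 hπ0 hπ1 _ σ a) r j
  simpa only [pow_mul_sum_gradCoeff_mul, actionValue] using
    hasSum_sum_range_mul_of_summable_norm hvisits hreward

theorem pow_mul_sum_hca_mul_Pn_mul (hp0 : ∀ s a s', 0 ≤ p s a s') (hπ0 : ∀ s a, 0 ≤ π s a)
    (γ : ℝ) (r : S → ℝ) (j : ℕ) (a : A) (s : S) :
    γ ^ j * ∑ s', hca p π (j + 1) a s s' * Pn p π (j + 1) s s' * r s' =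
      π s a * (γ ^ j * ∑ s', Pa p π (j + 1) s a s' * r s') := by
  simp only [hca_mul_Pn hp0 hπ0, mul_sum]
  exact sum_congr rfl fun s' _ => by ring

theorem abs_pow_mul_sum_hca_mul_Pn_mul_le (hp0 : ∀ s a s', 0 ≤ p s a s')
    (hp1 : ∀ s a, ∑ s', p s a s' = 1) (hπ0 : ∀ s a, 0 ≤ π s a) (hπ1 : ∀ s, ∑ a, π s a = 1)
    {γ : ℝ} (hγ0 : 0 ≤ γ) (r : S → ℝ) (j : ℕ) (a : A) (s : S) :
    |γ ^ j * ∑ s', hca p π (j + 1) a s s' * Pn p π (j + 1) s s' * r s'| ≤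
      γ ^ j * ∑ s', |r s'| := by
  rw [pow_mul_sum_hca_mul_Pn_mul hp0 hπ0, abs_mul, abs_of_nonneg (hπ0 s a)]
  refine (mul_le_of_le_one_left (abs_nonneg _) (le_one_of_sum_eq_one (hπ0 s) (hπ1 s) a)).trans ?_
  simpa only [one_mul] using
    abs_pow_mul_sum_mul_le hγ0 (Pa_nonneg hp0 hπ0 _ s a) (Pa_le_one hp0 hp1 hπ0 hπ1 _ s a) r j

theorem tsum_pow_mul_sum_hca_smul_fderiv_log {E : Type*} [NormedAddCommGroup E]
    [NormedSpace ℝ E] (hp0 : ∀ s a s', 0 ≤ p s a s') {Pol : E → S → A → ℝ} {θ : E}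
    (hpos : ∀ s a, 0 < Pol θ s a) (hdiff : ∀ s a, DifferentiableAt ℝ (fun θ' => Pol θ' s a) θ)
    (γ : ℝ) (r : S → ℝ) (a : A) (s : S) :
    (∑' j : ℕ, γ ^ j * ∑ s', hca p (Pol θ) (j + 1) a s s' * Pn p (Pol θ) (j + 1) s s' * r s') •
        fderiv ℝ (fun θ' => Real.log (Pol θ' s a)) θ =
      actionValue p (Pol θ) γ r s a • fderiv ℝ (fun θ' => Pol θ' s a) θ := by
  simp only [pow_mul_sum_hca_mul_Pn_mul hp0 (fun s a => (hpos s a).le), tsum_mul_left,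
    fderiv.log (hdiff s a) (hpos s a).ne', smul_smul, actionValue]
  rw [mul_comm, ← mul_assoc, inv_mul_cancel₀ (hpos s a).ne', one_mul]

end Hindsight

theorem hindsight_policy_gradient_next_state_rewards_general
    {S A : Type*} [Fintype S] [Fintype A]
    (p : S → A → S → ℝ)
    (hp0 : ∀ s a s', 0 ≤ p s a s') (hp1 : ∀ s a, ∑ s', p s a s' = 1)
    (d : ℕ) (Pol : EuclideanSpace ℝ (Fin d) → S → A → ℝ)
    (hPolpos : ∀ θ s a, 0 < Pol θ s a) (hPol1 : ∀ θ s, ∑ a, Pol θ s a = 1)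
    (hPoldiff : ∀ s a, ContDiff ℝ 1 fun θ => Pol θ s a)
    (γ : ℝ) (hγ0 : 0 ≤ γ) (hγ1 : γ < 1) (r : S → ℝ) (s₀ : S)
    (θ : EuclideanSpace ℝ (Fin d)) :
    Summable (fun k : ℕ => |γ ^ k * ∑ s', Pn p (Pol θ) (k + 1) s₀ s' * r s'|) ∧
    DifferentiableAt ℝ
      (fun θ' => ∑' k : ℕ, γ ^ k * ∑ s', Pn p (Pol θ') (k + 1) s₀ s' * r s') θ ∧
    (∀ (s : S) (a : A), Summable (fun j : ℕ =>
      |γ ^ j * ∑ s', hca p (Pol θ) (j + 1) a s s' * Pn p (Pol θ) (j + 1) s s' * r s'|)) ∧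
    Summable (fun t : ℕ =>
      ‖(γ ^ t) • ∑ s, (Pn p (Pol θ) t s₀ s) • ∑ a,
          (∑' j : ℕ, γ ^ j *
              ∑ s', hca p (Pol θ) (j + 1) a s s' * Pn p (Pol θ) (j + 1) s s' * r s') •
            fderiv ℝ (fun θ' => Real.log (Pol θ' s a)) θ‖) ∧
    fderiv ℝ (fun θ' => ∑' k : ℕ, γ ^ k * ∑ s', Pn p (Pol θ') (k + 1) s₀ s' * r s') θ =
      ∑' t : ℕ, (γ ^ t) • ∑ s, (Pn p (Pol θ) t s₀ s) • ∑ a,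
        (∑' j : ℕ, γ ^ j *
            ∑ s', hca p (Pol θ) (j + 1) a s s' * Pn p (Pol θ) (j + 1) s s' * r s') •
          fderiv ℝ (fun θ' => Real.log (Pol θ' s a)) θ := by
  have hPol0 : ∀ θ s a, 0 ≤ Pol θ s a := fun θ s a => (hPolpos θ s a).le
  have hdiff : ∀ s a, DifferentiableAt ℝ (fun θ' => Pol θ' s a) θ :=
    fun s a => (hPoldiff s a).differentiable one_ne_zero θ
  have hV := hasFDerivAt_tsum_pow_mul_sum_Pn_mul hp0 hp1 Pol hPol0 hPol1 hPoldiff hγ0 hγ1 r s₀ θ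
  have hcoeff := hasSum_pow_mul_sum_gradCoeff_mul hp0 hp1 (hPol0 θ) (hPol1 θ) hγ0 hγ1 r s₀
  have hvisits : ∀ σ a, Summable fun t : ℕ =>
      |γ ^ t * Pn p (Pol θ) t s₀ σ * actionValue p (Pol θ) γ r σ a| := fun σ a =>
    summable_abs_of_abs_le_geometric hγ0 hγ1 fun t => by
      rw [abs_mul]
      exact mul_le_mul_of_nonneg_right
        (abs_pow_mul_Pn_le hp0 hp1 (hPol0 θ) (hPol1 θ) hγ0 t s₀ σ) (abs_nonneg _)
  refine ⟨summable_abs_of_abs_le_geometric hγ0 hγ1 fun k => abs_pow_mul_sum_mul_le hγ0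
      (Pn_nonneg hp0 (hPol0 θ) _ s₀) (Pn_le_one hp0 hp1 (hPol0 θ) (hPol1 θ) _ s₀) r k,
    hV.differentiableAt, fun s a => summable_abs_of_abs_le_geometric hγ0 hγ1 fun j =>
      abs_pow_mul_sum_hca_mul_Pn_mul_le hp0 hp1 (hPol0 θ) (hPol1 θ) hγ0 r j a s, ?_, ?_⟩ <;>
  simp only [tsum_pow_mul_sum_hca_smul_fderiv_log hp0 (hPolpos θ) hdiff, smul_sum, smul_smul,
    ← mul_assoc]
  · exact summable_norm_sum_sum_smul hvisits _
  · rw [hV.fderiv, tsum_sum_sum_smul (fun σ a => (hcoeff σ a).summable),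
      tsum_sum_sum_smul (fun σ a => (hvisits σ a).of_abs)]
    exact sum_congr rfl fun σ _ => sum_congr rfl fun a _ => by
      rw [(hcoeff σ a).tsum_eq, tsum_mul_right]

/-- Theorem A.1: hindsight policy gradient with next-state rewards.
The value `V^θ(s₀) = ∑_k γ^k ∑_{s'} P^θ_{k+1}(s₀,s') r(s')` converges absolutely, is
differentiable in `θ`, and its gradient is the hindsight-credited policy-gradient
series (with `j = k - t` indexing the lag), all series converging absolutely. -/
theorem hindsight_policy_gradient_next_state_rewards
    {S A : Type*} [Fintype S] [Fintype A] [Nonempty S] [Nonempty A]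
    (p : S → A → S → ℝ)
    (hp0 : ∀ s a s', 0 ≤ p s a s') (hp1 : ∀ s a, ∑ s', p s a s' = 1)
    (d : ℕ) (Pol : EuclideanSpace ℝ (Fin d) → S → A → ℝ)
    (hPolpos : ∀ θ s a, 0 < Pol θ s a) (hPol1 : ∀ θ s, ∑ a, Pol θ s a = 1)
    (hPoldiff : ∀ s a, ContDiff ℝ 1 fun θ => Pol θ s a)
    (γ : ℝ) (hγ0 : 0 ≤ γ) (hγ1 : γ < 1) (r : S → ℝ) (s₀ : S)
    (θ : EuclideanSpace ℝ (Fin d)) :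
    Summable (fun k : ℕ => |γ ^ k * ∑ s', Pn p (Pol θ) (k + 1) s₀ s' * r s'|) ∧
    DifferentiableAt ℝ
      (fun θ' => ∑' k : ℕ, γ ^ k * ∑ s', Pn p (Pol θ') (k + 1) s₀ s' * r s') θ ∧
    (∀ (s : S) (a : A), Summable (fun j : ℕ =>
      |γ ^ j * ∑ s', hca p (Pol θ) (j + 1) a s s' * Pn p (Pol θ) (j + 1) s s' * r s'|)) ∧
    Summable (fun t : ℕ =>
      ‖(γ ^ t) • ∑ s, (Pn p (Pol θ) t s₀ s) • ∑ a,
          (∑' j : ℕ, γ ^ j *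
              ∑ s', hca p (Pol θ) (j + 1) a s s' * Pn p (Pol θ) (j + 1) s s' * r s') •
            fderiv ℝ (fun θ' => Real.log (Pol θ' s a)) θ‖) ∧
    fderiv ℝ (fun θ' => ∑' k : ℕ, γ ^ k * ∑ s', Pn p (Pol θ') (k + 1) s₀ s' * r s') θ =
      ∑' t : ℕ, (γ ^ t) • ∑ s, (Pn p (Pol θ) t s₀ s) • ∑ a,
        (∑' j : ℕ, γ ^ j *
            ∑ s', hca p (Pol θ) (j + 1) a s s' * Pn p (Pol θ) (j + 1) s s' * r s') •
          fderiv ℝ (fun θ' => Real.log (Pol θ' s a)) θ :=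
  hindsight_policy_gradient_next_state_rewards_general p hp0 hp1 d Pol hPolpos hPol1 hPoldiff γ hγ0
    hγ1 r s₀ θ
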